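/- For a transitive partial applicative structure R the following are equivalent: (i) R is antisymmetric; (ii) R satisfies 1W and TL; (iii) R satisfies 1W and TO. -/

import Mathlib

/-- Application lifted to partially-defined arguments: `oapp op x y` is the
value of the applicative term `x · y`, where `x`, `y` may be undefined. -/
def oapp {R : Type} (op : R → R → Option R) (x y : Option R) : Option R :=
  x.bind fun a => y.bind fun b => op a b

/-- The indexed entailment relation `φ ⊢_I ψ` on `P(R)^I` induced by a PAS. -/
def Entails {R : Type} (op : R → R → Option R) {I : Type} (φ ψ : I → Set R) : Prop :=
  ∃ r : R, ∀ i : I, ∀ a ∈ φ i, ∃ b : R, op r a = some b ∧ b ∈ ψ i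

/-- The entailment relation `A ⊢ B` on `P(R)` induced by a PAS. -/
def Entails1 {R : Type} (op : R → R → Option R) (A B : Set R) : Prop :=
  ∃ r : R, ∀ a ∈ A, ∃ b : R, op r a = some b ∧ b ∈ B

/-- `piter f n a` is the `n`-th iterate `f^n(a)` of the partial function `f` at `a`. -/
def piter {R : Type} (f : R → Option R) : ℕ → R → Option R
  | 0 => fun a => some a
  | n + 1 => fun a => (piter f n a).bind f

/-- A partial function is TO if every point has finite odd order or finite divergence. -/
def TOfun {R : Type} (f : R → Option R) : Prop :=
  ∀ a : R,
    (∃ n : ℕ, (1 ≤ n ∧ piter f n a = some a ∧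
        ∀ m : ℕ, 1 ≤ m → piter f m a = some a → n ≤ m) ∧ Odd n) ∨
    (∃ n : ℕ, 1 ≤ n ∧ piter f n a = none)

/-- A partial function is TL if every point is a fixed point or has finite divergence. -/
def TLfun {R : Type} (f : R → Option R) : Prop :=
  ∀ a : R, f a = some a ∨ (∃ n : ℕ, 1 ≤ n ∧ piter f n a = none)

/-! Under 1W and transitivity every cycle of `[r]` is a fixed point: the successor `r · a` of `a`
on the cycle is realized back to `a`, so `a = r · a`. Hence TO and TL agree.

Antisymmetry gives TL: if all `[r]`-iterates of `a` are defined, `[r]` realizes both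
`T ⊢ T ∘ succ` and `T ∘ succ ⊢ T` for the tail sets `T n = {rᵐ a | m ≥ n}`, so `a ∈ T 1` lies on a
cycle. Conversely, if `r` and `s` realize `φ ⊢ ψ` and `ψ ⊢ φ`, transitivity yields a `u` with
`u · a = s · (r · a)` mapping each `φ i` into itself; TL makes every `a ∈ φ i` a fixed point of
`[u]`, and 1W turns `s · (r · a) = a` into `a = r · a ∈ ψ i`. -/

section Iterate

variable {R : Type} (f : R → Option R)

theorem piter_succ (n : ℕ) (a : R) : piter f (n + 1) a = (piter f n a).bind f := rfl

theorem piter_one (a : R) : piter f 1 a = f a := rfl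

theorem piter_add (m n : ℕ) (a : R) :
    piter f (m + n) a = (piter f m a).bind (piter f n) := by
  induction n with
  | zero => cases piter f m a <;> rfl
  | succ n ih => cases h : piter f m a <;> simp [← add_assoc, piter_succ, ih, h]

theorem piter_succ' (n : ℕ) (a : R) : piter f (n + 1) a = (f a).bind (piter f n) := by
  rw [add_comm, piter_add, piter_one]

variable {f}

theorem exists_piter_eq_some_mem {S : Set R} (hS : ∀ x ∈ S, ∃ y ∈ S, f x = some y)
    {a : R} (ha : a ∈ S) (n : ℕ) : ∃ y ∈ S, piter f n a = some y := by
  induction n with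
  | zero => exact ⟨a, ha, rfl⟩
  | succ n ih =>
    obtain ⟨x, hx, hxn⟩ := ih
    obtain ⟨y, hy, hxy⟩ := hS x hx
    exact ⟨y, hy, by rw [piter_succ, hxn, Option.bind_some, hxy]⟩

theorem TLfun.tOfun (h : TLfun f) : TOfun f := fun a =>
  (h a).imp_left fun ha => ⟨1, ⟨le_rfl, ha, fun _ hm _ => hm⟩, odd_one⟩

theorem TLfun.apply_eq_self (h : TLfun f) {a : R} (ha : ∀ n, piter f n a ≠ none) :
    f a = some a :=
  (h a).resolve_right fun ⟨n, _, hn⟩ => ha n hn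

end Iterate

namespace PAS

variable {R : Type} (op : R → R → Option R)

def IsTransitive : Prop :=
  ∀ (I : Type) (φ ψ ρ : I → Set R),
    Entails op φ ψ → Entails op ψ ρ → Entails op φ ρ

def IsAntisymm : Prop :=
  ∀ (I : Type) (φ ψ : I → Set R), Entails op φ ψ → Entails op ψ φ → φ = ψ

def OneW : Prop :=
  ∀ r s a b : R, op r a = some b → op s b = some a → a = b

def Reaches (a b : R) : Prop :=
  ∃ s, op s a = some b

variable {op}

theorem entails_singleton_iff {I : Type} {a b : I → R} :
    Entails op (fun i => {a i}) (fun i => {b i}) ↔ ∃ r, ∀ i, op r (a i) = some (b i) := by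
  simp [Entails]

theorem IsTransitive.exists_comp (hT : IsTransitive op) {I : Type} {a b c : I → R} {r s : R}
    (hr : ∀ i, op r (a i) = some (b i)) (hs : ∀ i, op s (b i) = some (c i)) :
    ∃ u, ∀ i, op u (a i) = some (c i) :=
  entails_singleton_iff.mp <|
    hT I _ _ _ (entails_singleton_iff.mpr ⟨r, hr⟩) (entails_singleton_iff.mpr ⟨s, hs⟩)

theorem Reaches.trans (hT : IsTransitive op) {a b c : R} (hab : Reaches op a b)
    (hbc : Reaches op b c) : Reaches op a c := by
  obtain ⟨r, hr⟩ := hab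
  obtain ⟨s, hs⟩ := hbc
  obtain ⟨u, hu⟩ := hT.exists_comp (I := Unit) (r := r) (s := s) (fun _ => hr) (fun _ => hs)
  exact ⟨u, hu ()⟩

theorem reaches_of_piter_eq_some (hT : IsTransitive op) (r : R) {n : ℕ} (hn : 1 ≤ n)
    {a b : R} (h : piter (op r) n a = some b) : Reaches op a b := by
  induction n, hn using Nat.le_induction generalizing b with
  | base => exact ⟨r, h⟩
  | succ n hn ih =>
    obtain ⟨c, hc, hcb⟩ := Option.bind_eq_some_iff.mp h
    exact (ih hc).trans hT ⟨r, hcb⟩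

theorem OneW.apply_eq_self_of_piter_eq_self (h1W : OneW op) (hT : IsTransitive op) {r a : R}
    {n : ℕ} (hn : 1 ≤ n) (h : piter (op r) n a = some a) : op r a = some a := by
  obtain ⟨k, rfl⟩ := Nat.exists_eq_add_of_le' hn
  obtain ⟨a₁, ha₁, hk⟩ := Option.bind_eq_some_iff.mp ((piter_succ' _ k a).symm.trans h)
  rcases Nat.eq_zero_or_pos k with rfl | hk_pos
  · rwa [Option.some_injective _ hk] at ha₁
  · obtain ⟨s, hs⟩ := reaches_of_piter_eq_some hT r hk_pos hk
    rwa [← h1W r s a a₁ ha₁ hs] at ha₁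

theorem OneW.tLfun_of_tOfun (h1W : OneW op) (hT : IsTransitive op) {r : R}
    (h : TOfun (op r)) : TLfun (op r) := fun a =>
  (h a).imp_left fun ⟨_, ⟨hn, hcyc, _⟩, _⟩ => h1W.apply_eq_self_of_piter_eq_self hT hn hcyc

theorem IsAntisymm.oneW (hA : IsAntisymm op) : OneW op := by
  intro r s a b hr hs
  have h := hA Unit (fun _ => {a}) (fun _ => {b}) (entails_singleton_iff.mpr ⟨r, fun _ => hr⟩)
    (entails_singleton_iff.mpr ⟨s, fun _ => hs⟩)
  exact Set.singleton_eq_singleton_iff.mp (congrFun h ())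

theorem IsAntisymm.exists_piter_eq_self (hA : IsAntisymm op) {r a : R}
    (ha : ∀ n, piter (op r) n a ≠ none) : ∃ n, 1 ≤ n ∧ piter (op r) n a = some a := by
  let tail : ℕ → Set R := fun n => {x | ∃ m, n ≤ m ∧ piter (op r) m a = some x}
  have step : ∀ n, ∀ x ∈ tail n, ∃ y, op r x = some y ∧ y ∈ tail (n + 1) := by
    rintro n x ⟨m, hm, hx⟩
    obtain ⟨y, hy⟩ := Option.ne_none_iff_exists'.mp (ha (m + 1))
    rw [piter_succ, hx, Option.bind_some] at hy
    exact ⟨y, hy, m + 1, by omega, by rw [piter_succ, hx, Option.bind_some, hy]⟩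
  have tail_mono : ∀ n, tail (n + 1) ⊆ tail n :=
    fun n x ⟨m, hm, hx⟩ => ⟨m, by omega, hx⟩
  have heq := hA ℕ tail (fun n => tail (n + 1)) ⟨r, step⟩
    ⟨r, fun n x hx => (step _ x hx).imp fun _ ⟨hy, hmem⟩ =>
      ⟨hy, tail_mono n (tail_mono _ hmem)⟩⟩
  exact (congrFun heq 0 ▸ ⟨0, le_rfl, rfl⟩ : a ∈ tail 1)

theorem IsAntisymm.tLfun (hA : IsAntisymm op) (hT : IsTransitive op) (r : R) :
    TLfun (op r) := by
  refine fun a => ?_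
  by_cases hdiv : ∃ n, 1 ≤ n ∧ piter (op r) n a = none
  · exact Or.inr hdiv
  · have ha : ∀ n, piter (op r) n a ≠ none
      | 0 => Option.some_ne_none a
      | n + 1 => fun h => hdiv ⟨n + 1, by omega, h⟩
    obtain ⟨n, hn, hcyc⟩ := hA.exists_piter_eq_self ha
    exact Or.inl (hA.oneW.apply_eq_self_of_piter_eq_self hT hn hcyc)

theorem OneW.subset_of_entails (h1W : OneW op) (hT : IsTransitive op)
    (hTL : ∀ r, TLfun (op r)) {I : Type} {φ ψ : I → Set R}
    (hφψ : Entails op φ ψ) (hψφ : Entails op ψ φ) (i : I) : φ i ⊆ ψ i := by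
  obtain ⟨r, hr⟩ := hφψ
  obtain ⟨s, hs⟩ := hψφ
  choose b hb hbψ using fun p : (j : I) × φ j => hr p.1 p.2 p.2.2
  choose c hc hcφ using fun p : (j : I) × φ j => hs p.1 (b p) (hbψ p)
  obtain ⟨u, hu⟩ := hT.exists_comp (a := fun p => p.2.1) hb hc
  have hmaps : ∀ x ∈ φ i, ∃ y ∈ φ i, op u x = some y :=
    fun x hx => ⟨_, hcφ ⟨i, x, hx⟩, hu ⟨i, x, hx⟩⟩
  intro a ha
  have hfix : op u a = some a := (hTL u).apply_eq_self fun n hn => by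
    obtain ⟨y, -, hy⟩ := exists_piter_eq_some_mem hmaps ha n
    exact Option.some_ne_none y (hy.symm.trans hn)
  have hca : c ⟨i, a, ha⟩ = a := Option.some_injective _ ((hu ⟨i, a, ha⟩).symm.trans hfix)
  have hab : a = b ⟨i, a, ha⟩ := h1W r s a _ (hb ⟨i, a, ha⟩) (by rw [hc, hca])
  exact hab ▸ hbψ ⟨i, a, ha⟩

theorem OneW.isAntisymm (h1W : OneW op) (hT : IsTransitive op) (hTL : ∀ r, TLfun (op r)) :
    IsAntisymm op := fun _ _ _ hφψ hψφ => funext fun i =>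
  (h1W.subset_of_entails hT hTL hφψ hψφ i).antisymm (h1W.subset_of_entails hT hTL hψφ hφψ i)

end PAS

theorem stmt_16_general {R : Type} (op : R → R → Option R)
    (hTrans : ∀ (I : Type) (φ ψ ρ : I → Set R),
      Entails op φ ψ → Entails op ψ ρ → Entails op φ ρ) :
    [ -- antisymmetric
      (∀ (I : Type) (φ ψ : I → Set R),
        Entails op φ ψ → Entails op ψ φ → φ = ψ),
      -- 1W ∧ TL
      ((∀ r s a b : R, op r a = some b → op s b = some a → a = b) ∧
        ∀ r : R, TLfun (fun a => op r a)),
      -- 1W ∧ TO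
      ((∀ r s a b : R, op r a = some b → op s b = some a → a = b) ∧
        ∀ r : R, TOfun (fun a => op r a)) ].TFAE := by
  tfae_have 1 → 2 := fun hA => ⟨PAS.IsAntisymm.oneW hA, PAS.IsAntisymm.tLfun hA hTrans⟩
  tfae_have 2 → 1 := fun ⟨h1W, hTL⟩ => PAS.OneW.isAntisymm h1W hTrans hTL
  tfae_have 2 → 3 := fun ⟨h1W, hTL⟩ => ⟨h1W, fun r => (hTL r).tOfun⟩
  tfae_have 3 → 2 := fun ⟨h1W, hTO⟩ =>
    ⟨h1W, fun r => PAS.OneW.tLfun_of_tOfun h1W hTrans (hTO r)⟩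
  tfae_finish

/-- For a transitive PAS, antisymmetry, 1W ∧ TL and 1W ∧ TO are
equivalent. -/
theorem stmt_16 {R : Type} [Nonempty R] (op : R → R → Option R)
    (hTrans : ∀ (I : Type) (φ ψ ρ : I → Set R),
      Entails op φ ψ → Entails op ψ ρ → Entails op φ ρ) :
    [ -- antisymmetric
      (∀ (I : Type) (φ ψ : I → Set R),
        Entails op φ ψ → Entails op ψ φ → φ = ψ),
      -- 1W ∧ TL
      ((∀ r s a b : R, op r a = some b → op s b = some a → a = b) ∧
        ∀ r : R, TLfun (fun a => op r a)),
      -- 1W ∧ TO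
      ((∀ r s a b : R, op r a = some b → op s b = some a → a = b) ∧
        ∀ r : R, TOfun (fun a => op r a)) ].TFAE :=
  stmt_16_general op hTrans
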